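/- Let $f, g, h$ be nonnegative locally integrable functions on $(t_0, \infty)$ such that $f' (t) \le g(t) f(t) + h(t)$ for all $t \ge t_0$ (with $f$ differentiable), and suppose there exist positive constants $r, a_1, a_2, a_3$ with $\int_t^{t+r} f \le a_1$, $\int_t^{t+r} g \le a_2$, $\int_t^{t+r} h \le a_3$ for all $t \ge t_0$. Then $f(t+r) \le (a_1/r + a_3) e^{a_2}$ for all $t \ge t_0$. -/

import Mathlib

/-!
On each window `[s, t + r]` the function `f · exp (-∫ₛ g)` grows at most at rate `h`, which gives
`f (t + r) ≤ (f s + a3) · exp a2` for every `s ∈ [t, t + r]`; averaging over `s` and using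
`∫ f ≤ a1` yields the bound. Since `g` is merely integrable, `∫ₛ g` is differentiable only almost
everywhere, so the comparison goes through the fundamental theorem of calculus for absolutely
continuous functions.
-/

open MeasureTheory intervalIntegral Set Filter Real

section AbsolutelyContinuous

variable {X Y : Type*} [PseudoMetricSpace X] [PseudoMetricSpace Y] {f : ℝ → X} {a b : ℝ}

theorem AbsolutelyContinuousOnInterval.congr {g : ℝ → X}
    (hf : AbsolutelyContinuousOnInterval f a b) (hfg : EqOn f g (uIcc a b)) :
    AbsolutelyContinuousOnInterval g a b := by
  refine Tendsto.congr' ?_ hf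
  filter_upwards [eventually_inf_principal.2 (Eventually.of_forall fun _ hE ↦ hE)] with E hE
  exact Finset.sum_congr rfl fun i hi ↦ by rw [hfg (hE.1 i hi).1, hfg (hE.1 i hi).2]

theorem LipschitzOnWith.comp_absolutelyContinuousOnInterval {φ : X → Y} {K : NNReal} {s : Set X}
    (hφ : LipschitzOnWith K φ s) (hf : AbsolutelyContinuousOnInterval f a b)
    (hfs : MapsTo f (uIcc a b) s) : AbsolutelyContinuousOnInterval (φ ∘ f) a b := by
  have hK : Tendsto _ _ (nhds ((K : ℝ) * 0)) := Tendsto.const_mul (K : ℝ) hf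
  rw [mul_zero] at hK
  refine squeeze_zero' (Eventually.of_forall fun _ ↦ Finset.sum_nonneg fun _ _ ↦ dist_nonneg)
    ?_ hK
  filter_upwards [eventually_inf_principal.2 (Eventually.of_forall fun _ hE ↦ hE)] with E hE
  rw [Finset.mul_sum]
  gcongr with i hi
  exact hφ.dist_le_mul _ (hfs (hE.1 i hi).1) _ (hfs (hE.1 i hi).2)

theorem LocallyLipschitz.comp_absolutelyContinuousOnInterval {F : Type*}
    [SeminormedAddCommGroup F] {φ : F → Y} {f : ℝ → F}
    (hφ : LocallyLipschitz φ) (hf : AbsolutelyContinuousOnInterval f a b) :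
    AbsolutelyContinuousOnInterval (φ ∘ f) a b := by
  obtain ⟨K, hK⟩ := hφ.locallyLipschitzOn.exists_lipschitzOnWith_of_compact
    (isCompact_uIcc.image_of_continuousOn hf.continuousOn)
  exact hK.comp_absolutelyContinuousOnInterval hf (mapsTo_image f _)

end AbsolutelyContinuous

theorem AbsolutelyContinuousOnInterval.of_hasDerivAt {f f' : ℝ → ℝ} {a b : ℝ}
    (hf : ∀ x ∈ uIcc a b, HasDerivAt f (f' x) x) (hf' : IntervalIntegrable f' volume a b) :
    AbsolutelyContinuousOnInterval f a b := by
  refine ((hf'.absolutelyContinuousOnInterval_intervalIntegral left_mem_uIcc).fun_add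
    (LipschitzWith.const (f a)).lipschitzOnWith.absolutelyContinuousOnInterval).congr
    fun x hx ↦ ?_
  dsimp only
  rw [integral_eq_sub_of_hasDerivAt (fun y hy ↦ hf y (uIcc_subset_uIcc_left hx hy))
    (hf'.mono_set (uIcc_subset_uIcc_left hx))]
  ring

theorem le_mul_exp_integral_of_hasDerivAt_le {f f' g h : ℝ → ℝ} {a b : ℝ} (hab : a ≤ b)
    (hf : ∀ x ∈ Icc a b, HasDerivAt f (f' x) x) (hf' : IntervalIntegrable f' volume a b)
    (hg : IntervalIntegrable g volume a b) (hg₀ : ∀ x ∈ Icc a b, 0 ≤ g x)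
    (hh : IntervalIntegrable h volume a b) (hh₀ : ∀ x ∈ Icc a b, 0 ≤ h x)
    (hfgh : ∀ x ∈ Icc a b, f' x ≤ g x * f x + h x) :
    f b ≤ (f a + ∫ x in a..b, h x) * exp (∫ x in a..b, g x) := by
  set G : ℝ → ℝ := fun x ↦ ∫ t in a..x, g t with hG
  have hG₀ : ∀ x ∈ Icc a b, 0 ≤ G x := fun x hx ↦
    integral_nonneg hx.1 fun t ht ↦ hg₀ t ⟨ht.1, ht.2.trans hx.2⟩
  have hy : AbsolutelyContinuousOnInterval (fun x ↦ f x * exp (-G x)) a b :=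
    (AbsolutelyContinuousOnInterval.of_hasDerivAt (by rwa [uIcc_of_le hab]) hf').fun_mul
      (contDiff_exp.locallyLipschitz.comp_absolutelyContinuousOnInterval
        (hg.absolutelyContinuousOnInterval_intervalIntegral left_mem_uIcc).fun_neg)
  have hy' : ∀ᵐ x ∂volume.restrict (Icc a b), deriv (fun x ↦ f x * exp (-G x)) x ≤ h x := by
    rw [ae_restrict_iff' measurableSet_Icc]
    filter_upwards [hg.ae_hasDerivAt_integral] with x hGx hx
    rw [uIcc_of_le hab] at hGx
    have hyx : HasDerivAt (fun x ↦ f x * exp (-G x))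
        (f' x * exp (-G x) + f x * (exp (-G x) * -g x)) x :=
      (hf x hx).mul (hGx hx a (left_mem_Icc.2 hab)).neg.exp
    rw [hyx.deriv]
    calc f' x * exp (-G x) + f x * (exp (-G x) * -g x) = (f' x - g x * f x) * exp (-G x) := by
          ring
      _ ≤ h x * exp (-G x) := by gcongr; linarith [hfgh x hx]
      _ ≤ h x := mul_le_of_le_one_right (hh₀ x hx) (exp_le_one_iff.2 (by linarith [hG₀ x hx]))
  have hy_le := integral_mono_ae_restrict hab hy.intervalIntegrable_deriv hh hy'
  rw [hy.integral_deriv_eq_sub] at hy_le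
  simp only [hG, integral_same, neg_zero, exp_zero, mul_one] at hy_le
  calc f b = f b * exp (-G b) * exp (G b) := by rw [mul_assoc, ← exp_add]; simp
    _ ≤ (f a + ∫ x in a..b, h x) * exp (G b) := by gcongr; linarith

theorem integral_le_of_le_left_of_nonneg {φ : ℝ → ℝ} {t s T : ℝ} (hs : s ∈ Icc t T)
    (hφ : IntervalIntegrable φ volume t T) (hφ₀ : ∀ x ∈ Icc t T, 0 ≤ φ x) :
    ∫ x in s..T, φ x ≤ ∫ x in t..T, φ x :=
  integral_mono_interval hs.1 hs.2 le_rfl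
    ((ae_restrict_iff' measurableSet_Ioc).2 (Eventually.of_forall fun x hx ↦
      hφ₀ x (Ioc_subset_Icc_self hx))) hφ

theorem le_mul_exp_integral_of_hasDerivAt_le_of_mem_Icc {f f' g h : ℝ → ℝ} {t s T : ℝ}
    (hs : s ∈ Icc t T) (hf : ∀ x ∈ Icc t T, HasDerivAt f (f' x) x)
    (hf' : IntervalIntegrable f' volume t T)
    (hg : IntervalIntegrable g volume t T) (hg₀ : ∀ x ∈ Icc t T, 0 ≤ g x)
    (hh : IntervalIntegrable h volume t T) (hh₀ : ∀ x ∈ Icc t T, 0 ≤ h x)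
    (hfgh : ∀ x ∈ Icc t T, f' x ≤ g x * f x + h x) (hfs : 0 ≤ f s) :
    f T ≤ (f s + ∫ x in t..T, h x) * exp (∫ x in t..T, g x) := by
  have hsub : Icc s T ⊆ Icc t T := Icc_subset_Icc_left hs.1
  have huIcc : uIcc s T ⊆ uIcc t T :=
    uIcc_subset_uIcc_right (by simpa [uIcc_of_le (hs.1.trans hs.2)])
  calc f T ≤ (f s + ∫ x in s..T, h x) * exp (∫ x in s..T, g x) :=
        le_mul_exp_integral_of_hasDerivAt_le hs.2 (fun x hx ↦ hf x (hsub hx))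
          (hf'.mono_set huIcc) (hg.mono_set huIcc) (fun x hx ↦ hg₀ x (hsub hx))
          (hh.mono_set huIcc) (fun x hx ↦ hh₀ x (hsub hx)) (fun x hx ↦ hfgh x (hsub hx))
    _ ≤ (f s + ∫ x in t..T, h x) * exp (∫ x in t..T, g x) := by
        have hh_int : 0 ≤ ∫ x in t..T, h x := integral_nonneg (hs.1.trans hs.2) hh₀
        gcongr
        · exact integral_le_of_le_left_of_nonneg hs hh hh₀
        · exact integral_le_of_le_left_of_nonneg hs hg hg₀

theorem uniform_gronwall_general
    (t0 r a1 a2 a3 : ℝ) (hr : 0 < r) (ha3 : 0 < a3)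
    (f g h f' : ℝ → ℝ)
    (hf_nonneg : ∀ t, t0 ≤ t → 0 ≤ f t)
    (hg_nonneg : ∀ t, t0 ≤ t → 0 ≤ g t)
    (hh_nonneg : ∀ t, t0 ≤ t → 0 ≤ h t)
    (hf_deriv : ∀ t, t0 ≤ t → HasDerivAt f (f' t) t)
    (hineq : ∀ t, t0 ≤ t → f' t ≤ g t * f t + h t)
    (hf_int : ∀ t, t0 ≤ t → IntervalIntegrable f volume t (t + r))
    (hg_int : ∀ t, t0 ≤ t → IntervalIntegrable g volume t (t + r))
    (hh_int : ∀ t, t0 ≤ t → IntervalIntegrable h volume t (t + r))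
    (hf'_int : ∀ t, t0 ≤ t → IntervalIntegrable f' volume t (t + r))
    (hIf : ∀ t, t0 ≤ t → (∫ s in t..(t + r), f s) ≤ a1)
    (hIg : ∀ t, t0 ≤ t → (∫ s in t..(t + r), g s) ≤ a2)
    (hIh : ∀ t, t0 ≤ t → (∫ s in t..(t + r), h s) ≤ a3) :
    ∀ t, t0 ≤ t → f (t + r) ≤ (a1 / r + a3) * Real.exp a2 := by
  intro t ht
  have hx₀ : ∀ x ∈ Icc t (t + r), t0 ≤ x := fun x hx ↦ ht.trans hx.1
  have hbound : ∀ s ∈ Icc t (t + r), f (t + r) ≤ (f s + a3) * exp a2 := fun s hs ↦ by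
    have hfs := hf_nonneg s (hx₀ s hs)
    calc f (t + r)
        ≤ (f s + ∫ x in t..t + r, h x) * exp (∫ x in t..t + r, g x) :=
          le_mul_exp_integral_of_hasDerivAt_le_of_mem_Icc hs (fun x hx ↦ hf_deriv x (hx₀ x hx))
            (hf'_int t ht) (hg_int t ht) (fun x hx ↦ hg_nonneg x (hx₀ x hx)) (hh_int t ht)
            (fun x hx ↦ hh_nonneg x (hx₀ x hx)) (fun x hx ↦ hineq x (hx₀ x hx)) hfs
      _ ≤ (f s + a3) * exp a2 := by
          gcongr
          exacts [hIh t ht, hIg t ht]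
  have hmean := integral_mono_on (by linarith) intervalIntegrable_const
    (((hf_int t ht).add intervalIntegrable_const).mul_const (exp a2)) hbound
  rw [intervalIntegral.integral_const, intervalIntegral.integral_mul_const,
    integral_add (hf_int t ht) intervalIntegrable_const, intervalIntegral.integral_const,
    add_sub_cancel_left, smul_eq_mul, smul_eq_mul] at hmean
  rw [div_add' _ _ _ hr.ne', div_mul_eq_mul_div, le_div_iff₀ hr]
  calc f (t + r) * r = r * f (t + r) := mul_comm _ _
    _ ≤ ((∫ s in t..t + r, f s) + r * a3) * exp a2 := hmean
    _ ≤ (a1 + a3 * r) * exp a2 := by rw [mul_comm r a3]; gcongr; exact hIf t ht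

/-- Uniform Gronwall lemma. -/
theorem uniform_gronwall
    (t0 r a1 a2 a3 : ℝ) (hr : 0 < r) (ha1 : 0 < a1) (ha2 : 0 < a2) (ha3 : 0 < a3)
    (f g h f' : ℝ → ℝ)
    (hf_nonneg : ∀ t, t0 ≤ t → 0 ≤ f t)
    (hg_nonneg : ∀ t, t0 ≤ t → 0 ≤ g t)
    (hh_nonneg : ∀ t, t0 ≤ t → 0 ≤ h t)
    (hf_deriv : ∀ t, t0 ≤ t → HasDerivAt f (f' t) t)
    (hineq : ∀ t, t0 ≤ t → f' t ≤ g t * f t + h t)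
    (hf_int : ∀ t, t0 ≤ t → IntervalIntegrable f volume t (t + r))
    (hg_int : ∀ t, t0 ≤ t → IntervalIntegrable g volume t (t + r))
    (hh_int : ∀ t, t0 ≤ t → IntervalIntegrable h volume t (t + r))
    (hf'_int : ∀ t, t0 ≤ t → IntervalIntegrable f' volume t (t + r))
    (hIf : ∀ t, t0 ≤ t → (∫ s in t..(t + r), f s) ≤ a1)
    (hIg : ∀ t, t0 ≤ t → (∫ s in t..(t + r), g s) ≤ a2)
    (hIh : ∀ t, t0 ≤ t → (∫ s in t..(t + r), h s) ≤ a3) :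
    ∀ t, t0 ≤ t → f (t + r) ≤ (a1 / r + a3) * Real.exp a2 :=
  uniform_gronwall_general t0 r a1 a2 a3 hr ha3 f g h f' hf_nonneg hg_nonneg hh_nonneg hf_deriv
    hineq hf_int hg_int hh_int hf'_int hIf hIg hIh
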